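/- Let (S̄, V̄₁, Ī₁) be a single-strain-1 equilibrium and (S̃, Ṽ₁, Ĩ₂) a single-strain-2 equilibrium of system (3), and set R̄₂ = ((∂F₂/∂I)(S̄, 0) + kV̄₁)/α₂ and R̃₁ = (∂F₁/∂I)(S̃, 0)/α₁. If R̄₂ > 1 and R̃₁ > 1, then system (3) admits an endemic equilibrium: there exist S* > 0, V₁* > 0, I₁* > 0, I₂* > 0 with Λ − F₁(S*, I₁*) − F₂(S*, I₂*) − λS* = 0, rS* − (μ + kI₂*)V₁* = 0, F₁(S*, I₁*) − α₁I₁* = 0 and F₂(S*, I₂*) + kI₂*V₁* − α₂I₂* = 0. -/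

import Mathlib

/-!
Eliminating `V₁ = r S / (μ + k I₂)` turns the strain-2 equations into `growth₂ S I₂ = 0`, where
`growth₂` is strictly increasing in `S` and, for `S > 0`, strictly decreasing in `I₂`. Its zero set
over `I₂ ∈ [0, Ĩ₂]` is therefore the graph of a function `S = σ(I₂)`, continuous because its graph
is closed and its values lie in the compact interval `[0, S̃]`, with `σ(Ĩ₂) = S̃`. Along this curve
the outflow `F₂ + λS = α₂ I₂ + μ (S + V₁)` increases strictly, so `I₁ = (Λ - F₂ - λS) / α₁` is
positive before `Ĩ₂` and vanishes there. Then `f₁(σ, I₁) - α₁` is positive at `I₂ = Ĩ₂` since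
`R̃₁ > 1`, and negative at `I₂ = 0` since `R̄₂ > 1` forces `σ(0) < S̄`, hence `I₁ > Ī₁`; the
intermediate value theorem gives the endemic equilibrium.
-/

open Set Filter Topology

theorem continuousOn_of_closed_graph_of_isCompact {X Y : Type*} [TopologicalSpace X]
    [TopologicalSpace Y] {s : Set X} {K : Set Y} {Z : Set (X × Y)} {φ : X → Y}
    (hK : IsCompact K) (hZ : IsClosed Z) (hφK : MapsTo φ s K) (hφZ : ∀ x ∈ s, (x, φ x) ∈ Z)
    (hunique : ∀ x ∈ s, ∀ y ∈ K, (x, y) ∈ Z → y = φ x) : ContinuousOn φ s := by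
  intro x hx
  refine hK.tendsto_nhds_of_unique_mapClusterPt (l := 𝓝[s] x)
    (eventually_nhdsWithin_of_forall hφK) fun y hy hcluster => hunique x hx y hy ?_
  have hgraph : MapClusterPt (x, y) (𝓝[s] x) fun x' => (x', φ x') := by
    rw [mapClusterPt_iff_frequently] at hcluster ⊢
    intro W hW
    obtain ⟨U, hU, V, hV, hUV⟩ := mem_nhds_prod_iff.mp hW
    exact ((hcluster V hV).and_eventually (mem_nhdsWithin_of_mem_nhds hU)).mono
      fun x' hx' => hUV ⟨hx'.2, hx'.1⟩
  exact hZ.mem_of_mapClusterPt hgraph (eventually_nhdsWithin_of_forall hφZ)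

theorem exists_continuousOn_zero_of_strictMonoOn {X : Type*} [TopologicalSpace X] {s : Set X}
    (hs : IsClosed s) {g : X → ℝ → ℝ} {a b : ℝ} (hab : a ≤ b)
    (hg : ContinuousOn (fun p : X × ℝ => g p.1 p.2) (s ×ˢ Icc a b))
    (hmono : ∀ x ∈ s, StrictMonoOn (g x) (Icc a b))
    (ha : ∀ x ∈ s, g x a ≤ 0) (hb : ∀ x ∈ s, 0 ≤ g x b) :
    ∃ σ : X → ℝ, ContinuousOn σ s ∧ ∀ x ∈ s, σ x ∈ Icc a b ∧ g x (σ x) = 0 := by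
  have hroot : ∀ x ∈ s, ∃ y ∈ Icc a b, g x y = 0 := fun x hx =>
    intermediate_value_Icc hab
      (hg.comp (continuous_const.prodMk continuous_id).continuousOn fun _ hy => ⟨hx, hy⟩)
      ⟨ha x hx, hb x hx⟩
  choose! σ hσ using hroot
  refine ⟨σ, continuousOn_of_closed_graph_of_isCompact isCompact_Icc
    (hg.preimage_isClosed_of_isClosed (hs.prod isClosed_Icc) isClosed_singleton)
    (fun x hx => (hσ x hx).1) (fun x hx => ⟨⟨hx, (hσ x hx).1⟩, (hσ x hx).2⟩) ?_, hσ⟩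
  rintro x hx y hy ⟨-, hy0⟩
  exact (hmono x hx).injOn hy (hσ x hx).1 (hy0.trans (hσ x hx).2.symm)

theorem HasDerivAt.eq_apply_zero_of_eq_mul {F φ : ℝ → ℝ} {d : ℝ} (hd : HasDerivAt F d 0)
    (hF : ∀ y, F y = y * φ y) (hφ : DifferentiableAt ℝ φ 0) : d = φ 0 :=
  hd.unique <| by simpa [funext hF] using (hasDerivAt_id' (0 : ℝ)).fun_mul hφ.hasDerivAt

theorem apply_eq_zero_of_mul_eq_zero {φ : ℝ → ℝ} (hφ : ContinuousAt φ 0)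
    (h : ∀ y, 0 ≤ y → y * φ y = 0) {y : ℝ} (hy : 0 ≤ y) : φ y = 0 := by
  have hpos : ∀ y, 0 < y → φ y = 0 := fun y hy =>
    (mul_eq_zero.mp (h y hy.le)).resolve_left hy.ne'
  rcases hy.eq_or_lt with rfl | hy
  · exact tendsto_nhds_unique (hφ.tendsto.mono_left nhdsWithin_le_nhds : Tendsto φ (𝓝[>] 0) _)
      (tendsto_const_nhds.congr' (eventually_nhdsWithin_of_forall fun y hy => (hpos y hy).symm))
  · exact hpos y hy

/-- The factor `f = F / I` of (H1), with the monotonicity that (H2) gives on the quadrant. -/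
structure IsPerCapitaIncidence (f : ℝ → ℝ → ℝ) : Prop where
  continuousOn : ContinuousOn (fun p : ℝ × ℝ => f p.1 p.2) {p : ℝ × ℝ | 0 ≤ p.1 ∧ 0 ≤ p.2}
  strictMonoOn_left : ∀ I, 0 ≤ I → StrictMonoOn (fun S => f S I) (Ici 0)
  antitoneOn_right : ∀ S, 0 ≤ S → AntitoneOn (f S) (Ici 0)

namespace IsPerCapitaIncidence

variable {f : ℝ → ℝ → ℝ}

theorem of_hasDerivAt {fS fI : ℝ → ℝ → ℝ}
    (hf : ContinuousOn (fun p : ℝ × ℝ => f p.1 p.2) {p : ℝ × ℝ | 0 ≤ p.1 ∧ 0 ≤ p.2})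
    (hdS : ∀ S I : ℝ, 0 ≤ S → 0 ≤ I → HasDerivAt (fun x => f x I) (fS S I) S)
    (hdI : ∀ S I : ℝ, 0 ≤ S → 0 ≤ I → HasDerivAt (fun y => f S y) (fI S I) I)
    (hS : ∀ S I : ℝ, 0 ≤ S → 0 ≤ I → 0 < fS S I)
    (hI : ∀ S I : ℝ, 0 ≤ S → 0 ≤ I → fI S I ≤ 0) : IsPerCapitaIncidence f where
  continuousOn := hf
  strictMonoOn_left I hI₀ := strictMonoOn_of_hasDerivWithinAt_pos (convex_Ici 0)
    (fun S hS₀ => (hdS S I hS₀ hI₀).continuousAt.continuousWithinAt)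
    (fun S hS₀ => (hdS S I (interior_subset hS₀) hI₀).hasDerivWithinAt)
    (fun S hS₀ => hS S I (interior_subset hS₀) hI₀)
  antitoneOn_right S hS₀ := antitoneOn_of_hasDerivWithinAt_nonpos (convex_Ici 0)
    (fun I hI₀ => (hdI S I hS₀ hI₀).continuousAt.continuousWithinAt)
    (fun I hI₀ => (hdI S I hS₀ (interior_subset hI₀)).hasDerivWithinAt)
    (fun I hI₀ => hI S I hS₀ (interior_subset hI₀))

theorem lt_of_lt_of_le (hf : IsPerCapitaIncidence f) {S S' I I' : ℝ} (hS : 0 ≤ S) (hSS' : S < S')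
    (hI' : 0 ≤ I') (hI'I : I' ≤ I) : f S I < f S' I' :=
  calc f S I ≤ f S I' := hf.antitoneOn_right S hS hI' (hI'.trans hI'I) hI'I
    _ < f S' I' := hf.strictMonoOn_left I' hI' hS (hS.trans hSS'.le) hSS'

end IsPerCapitaIncidence

/-- The per-capita growth rate of strain 2 at `(S, I₂)` when `V₁` sits at its equilibrium value
`r S / (μ + k I₂)`. -/
noncomputable def growth₂ (f₂ : ℝ → ℝ → ℝ) (k r μ α₂ S I : ℝ) : ℝ :=
  f₂ S I + k * (r * S / (μ + k * I)) - α₂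

section growth₂

variable {f₂ : ℝ → ℝ → ℝ} {k r μ α₂ : ℝ}

theorem growth₂_strictMonoOn_left (hf : IsPerCapitaIncidence f₂) (hk : 0 ≤ k) (hr : 0 ≤ r)
    (hμ : 0 < μ) {I : ℝ} (hI : 0 ≤ I) : StrictMonoOn (growth₂ f₂ k r μ α₂ · I) (Ici 0) := by
  intro S₁ hS₁ S₂ hS₂ hS
  have hf' := hf.strictMonoOn_left I hI hS₁ hS₂ hS
  have : k * (r * S₁ / (μ + k * I)) ≤ k * (r * S₂ / (μ + k * I)) := by gcongr
  simp only [growth₂] at hf' ⊢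
  linarith

theorem growth₂_strictAntiOn_right (hf : IsPerCapitaIncidence f₂) (hk : 0 < k) (hr : 0 < r)
    (hμ : 0 < μ) {S : ℝ} (hS : 0 < S) : StrictAntiOn (growth₂ f₂ k r μ α₂ S) (Ici 0) := by
  intro I₁ hI₁ I₂ hI₂ hI
  have hf' := hf.antitoneOn_right S hS.le hI₁ hI₂ hI.le
  have : 0 < μ + k * I₁ := by have : (0 : ℝ) ≤ I₁ := hI₁; positivity
  have : k * (r * S / (μ + k * I₂)) < k * (r * S / (μ + k * I₁)) := by gcongr
  simp only [growth₂] at hf' ⊢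
  linarith

theorem growth₂_continuousOn (hf : IsPerCapitaIncidence f₂) (hk : 0 ≤ k) (hμ : 0 < μ) :
    ContinuousOn (fun p : ℝ × ℝ => growth₂ f₂ k r μ α₂ p.1 p.2)
      {p : ℝ × ℝ | 0 ≤ p.1 ∧ 0 ≤ p.2} := by
  refine (hf.continuousOn.add (continuousOn_const.mul ((continuousOn_const.mul
    continuousOn_fst).div (continuousOn_const.add (continuousOn_const.mul continuousOn_snd))
    fun p hp => ?_))).sub continuousOn_const
  have : 0 ≤ p.2 := hp.2
  exact (by positivity : 0 < μ + k * p.2).ne'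

theorem growth₂_zero_left {I : ℝ} (h : f₂ 0 I = 0) : growth₂ f₂ k r μ α₂ 0 I = -α₂ := by
  simp [growth₂, h]

theorem growth₂_eq_zero_iff {S I V : ℝ} (hI : 0 < I) (hD : 0 < μ + k * I)
    (hV : r * S - (μ + k * I) * V = 0) :
    growth₂ f₂ k r μ α₂ S I = 0 ↔ I * f₂ S I + k * I * V - α₂ * I = 0 := by
  have hV' : r * S / (μ + k * I) = V := by rw [div_eq_iff hD.ne']; linarith
  rw [growth₂, hV', show I * f₂ S I + k * I * V - α₂ * I = I * (f₂ S I + k * V - α₂) by ring,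
    mul_eq_zero, or_iff_right hI.ne']

theorem outflow_eq_of_growth₂_eq_zero {S I : ℝ} (hD : 0 < μ + k * I)
    (h : growth₂ f₂ k r μ α₂ S I = 0) :
    I * f₂ S I + (r + μ) * S = α₂ * I + μ * S + μ * (r * S / (μ + k * I)) := by
  have hV : (μ + k * I) * (r * S / (μ + k * I)) = r * S := by field_simp
  rw [show f₂ S I = α₂ - k * (r * S / (μ + k * I)) by rw [growth₂] at h; linarith]
  linear_combination (-1 : ℝ) * hV

theorem outflow_lt_of_growth₂_eq_zero (hμ : 0 < μ) (hr : 0 ≤ r) (hk : 0 ≤ k) (hα₂ : 0 ≤ α₂)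
    {S₁ S₂ I₁ I₂ : ℝ} (hI₁ : 0 ≤ I₁) (hI : I₁ ≤ I₂) (hS : S₁ < S₂)
    (h₁ : growth₂ f₂ k r μ α₂ S₁ I₁ = 0) (h₂ : growth₂ f₂ k r μ α₂ S₂ I₂ = 0)
    (hf : 0 ≤ f₂ S₂ I₂) : I₁ * f₂ S₁ I₁ + (r + μ) * S₁ < I₂ * f₂ S₂ I₂ + (r + μ) * S₂ := by
  have hD₁ : 0 < μ + k * I₁ := by positivity
  have hD₂ : 0 < μ + k * I₂ := by nlinarith
  have hkV₂ : k * (r * S₂ / (μ + k * I₂)) ≤ α₂ := by rw [growth₂] at h₂; linarith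
  rw [outflow_eq_of_growth₂_eq_zero hD₁ h₁, outflow_eq_of_growth₂_eq_zero hD₂ h₂]
  set V₁ := r * S₁ / (μ + k * I₁) with hV₁
  set V₂ := r * S₂ / (μ + k * I₂) with hV₂
  have e₁ : (μ + k * I₁) * V₁ = r * S₁ := by rw [hV₁]; field_simp
  have e₂ : (μ + k * I₂) * V₂ = r * S₂ := by rw [hV₂]; field_simp
  nlinarith [mul_nonneg (mul_nonneg hμ.le (sub_nonneg.2 hI)) (sub_nonneg.2 hkV₂),
    mul_nonneg (mul_nonneg (mul_nonneg hk hI₁) hα₂) (sub_nonneg.2 hI),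
    mul_pos hD₁ (sub_pos.2 hS), mul_nonneg hr (sub_pos.2 hS).le]

end growth₂

section coexistence

variable {f₁ f₂ : ℝ → ℝ → ℝ} {Λ r μ k α₁ α₂ : ℝ}

theorem exists_nullcline₂ (hf₂ : IsPerCapitaIncidence f₂) (hf₂0 : ∀ I, 0 ≤ I → f₂ 0 I = 0)
    (hr : 0 < r) (hμ : 0 < μ) (hk : 0 < k) (hα₂ : 0 < α₂) {St It : ℝ} (hSt : 0 < St)
    (hIt : 0 < It) (ht : growth₂ f₂ k r μ α₂ St It = 0) :
    ∃ σ : ℝ → ℝ, ContinuousOn σ (Icc 0 It) ∧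
      (∀ I ∈ Icc 0 It, σ I ∈ Ioc 0 St ∧ growth₂ f₂ k r μ α₂ (σ I) I = 0) ∧
      σ It = St ∧ ∀ I ∈ Ico 0 It, σ I < St := by
  have hmono : ∀ I ∈ Icc 0 It, StrictMonoOn (growth₂ f₂ k r μ α₂ · I) (Ici 0) :=
    fun I hI => growth₂_strictMonoOn_left hf₂ hk.le hr.le hμ hI.1
  have hanti := growth₂_strictAntiOn_right hf₂ hk hr hμ hSt (α₂ := α₂)
  have hleft : ∀ I ∈ Icc 0 It, growth₂ f₂ k r μ α₂ 0 I = -α₂ :=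
    fun I hI => growth₂_zero_left (hf₂0 I hI.1)
  obtain ⟨σ, hσc, hσ⟩ := exists_continuousOn_zero_of_strictMonoOn
    (g := fun I S => growth₂ f₂ k r μ α₂ S I) isClosed_Icc hSt.le
    ((growth₂_continuousOn hf₂ hk.le hμ).comp continuous_swap.continuousOn
      fun p hp => ⟨hp.2.1, hp.1.1⟩)
    (fun I hI => (hmono I hI).mono Icc_subset_Ici_self)
    (fun I hI => by simp only [hleft I hI]; linarith)
    (fun I hI => ht ▸ hanti.antitoneOn hI.1 hIt.le hI.2)
  have hσpos : ∀ I ∈ Icc 0 It, 0 < σ I := fun I hI =>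
    (hσ I hI).1.1.lt_of_ne fun h => by
      have := (hσ I hI).2
      rw [← h, hleft I hI] at this
      linarith
  refine ⟨σ, hσc, fun I hI => ⟨⟨hσpos I hI, (hσ I hI).1.2⟩, (hσ I hI).2⟩,
    (hmono It ⟨hIt.le, le_rfl⟩).injOn (hσ It ⟨hIt.le, le_rfl⟩).1.1 hSt.le
      ((hσ It ⟨hIt.le, le_rfl⟩).2.trans ht.symm), fun I hI => ?_⟩
  have hI' : I ∈ Icc 0 It := Ico_subset_Icc_self hI
  by_contra! hle
  have h₁ : growth₂ f₂ k r μ α₂ St I ≤ 0 :=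
    (hσ I hI').2 ▸ (hmono I hI').monotoneOn hSt.le (hσpos I hI').le hle
  have h₂ : 0 < growth₂ f₂ k r μ α₂ St I := ht ▸ hanti hI.1 hIt.le hI.2
  linarith

theorem exists_coexistence (hf₁ : IsPerCapitaIncidence f₁) (hf₂ : IsPerCapitaIncidence f₂)
    (hf₂0 : ∀ I, 0 ≤ I → f₂ 0 I = 0) (hr : 0 < r) (hμ : 0 < μ) (hk : 0 < k) (hα₁ : 0 < α₁)
    (hα₂ : 0 < α₂) {Sb Ib St It : ℝ} (hSb : 0 ≤ Sb) (hIb : 0 ≤ Ib) (hb₁ : f₁ Sb Ib = α₁)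
    (hb₂ : α₁ * Ib + (r + μ) * Sb = Λ) (hSt : 0 < St) (hIt : 0 < It)
    (ht₁ : growth₂ f₂ k r μ α₂ St It = 0) (ht₂ : It * f₂ St It + (r + μ) * St = Λ)
    (ht₃ : 0 ≤ f₂ St It) (hR₂ : 0 < growth₂ f₂ k r μ α₂ Sb 0) (hR₁ : α₁ < f₁ St 0) :
    ∃ S I₁ I₂, 0 < S ∧ 0 < I₁ ∧ 0 < I₂ ∧ f₁ S I₁ = α₁ ∧ growth₂ f₂ k r μ α₂ S I₂ = 0 ∧
      α₁ * I₁ + I₂ * f₂ S I₂ + (r + μ) * S = Λ := by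
  obtain ⟨σ, hσc, hσ, hσIt, hσlt⟩ := exists_nullcline₂ hf₂ hf₂0 hr hμ hk hα₂ hSt hIt ht₁
  set J : ℝ → ℝ := fun I => (Λ - (I * f₂ (σ I) I + (r + μ) * σ I)) / α₁ with hJ
  have hJpos : ∀ I ∈ Ico 0 It, 0 < J I := fun I hI => div_pos (sub_pos.2 (ht₂ ▸
    outflow_lt_of_growth₂_eq_zero hμ hr.le hk.le hα₂.le hI.1 hI.2.le (hσlt I hI)
      (hσ I (Ico_subset_Icc_self hI)).2 ht₁ ht₃)) hα₁
  have hJIt : J It = 0 := by simp [J, hσIt, ht₂]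
  have hJnn : ∀ I ∈ Icc 0 It, 0 ≤ J I := fun I hI =>
    hI.2.eq_or_lt.elim (fun h => h ▸ hJIt.ge) fun h => (hJpos I ⟨hI.1, h⟩).le
  have hJc : ContinuousOn J (Icc 0 It) :=
    ((continuousOn_const.sub ((continuousOn_id.mul (hf₂.continuousOn.comp
      (hσc.prodMk continuousOn_id) fun I hI => ⟨(hσ I hI).1.1.le, hI.1⟩)).add
        (continuousOn_const.mul hσc))).div_const α₁)
  have hΦc : ContinuousOn (fun I => f₁ (σ I) (J I)) (Icc 0 It) :=
    hf₁.continuousOn.comp (hσc.prodMk hJc) fun I hI => ⟨(hσ I hI).1.1.le, hJnn I hI⟩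
  have hσ0 : σ 0 < Sb := by
    by_contra! hle
    have := (growth₂_strictMonoOn_left (α₂ := α₂) hf₂ hk.le hr.le hμ le_rfl).monotoneOn hSb
      (hσ 0 ⟨le_rfl, hIt.le⟩).1.1.le hle
    linarith [(hσ 0 ⟨le_rfl, hIt.le⟩).2]
  have hΦ0 : f₁ (σ 0) (J 0) < α₁ := by
    refine hb₁ ▸ hf₁.lt_of_lt_of_le (hσ 0 ⟨le_rfl, hIt.le⟩).1.1.le hσ0 hIb ?_
    rw [hJ, le_div_iff₀ hα₁]
    nlinarith
  obtain ⟨I, hI, hΦI⟩ := intermediate_value_Ioo hIt.le hΦc ⟨hΦ0, by simpa [hσIt, hJIt]⟩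
  have hI' : I ∈ Icc 0 It := Ioo_subset_Icc_self hI
  refine ⟨σ I, J I, I, (hσ I hI').1.1, hJpos I ⟨hI.1.le, hI.2⟩, hI.1, hΦI, (hσ I hI').2, ?_⟩
  simp only [J]
  field_simp
  ring

end coexistence

theorem endemic_equilibrium_exists_general
    (Λ r μ k α₁ α₂ lam : ℝ)
    (hr : 0 < r) (hμ : 0 < μ) (hk : 0 < k)
    (hα₁ : μ < α₁) (hα₂ : μ < α₂) (hlam : lam = r + μ)
    (F₁ F₂ f₁ f₂ F₁I F₂I f₁S f₁I f₂S f₂I : ℝ → ℝ → ℝ)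
    (hF₂nn : ∀ S I : ℝ, 0 ≤ S → 0 ≤ I → 0 ≤ F₂ S I)
    (hf₁C1 : ContDiffOn ℝ 1 (fun p : ℝ × ℝ => f₁ p.1 p.2) {p : ℝ × ℝ | 0 ≤ p.1 ∧ 0 ≤ p.2})
    (hf₂C1 : ContDiffOn ℝ 1 (fun p : ℝ × ℝ => f₂ p.1 p.2) {p : ℝ × ℝ | 0 ≤ p.1 ∧ 0 ≤ p.2})
    (hH1₁ : ∀ S I : ℝ, F₁ S I = I * f₁ S I)
    (hH1₂ : ∀ S I : ℝ, F₂ S I = I * f₂ S I)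
    (hF₂zero : ∀ S I : ℝ, 0 ≤ S → 0 ≤ I → F₂ 0 I = 0 ∧ F₂ S 0 = 0)
    (hdF₁I : ∀ S I : ℝ, 0 ≤ S → 0 ≤ I → HasDerivAt (fun y => F₁ S y) (F₁I S I) I)
    (hdF₂I : ∀ S I : ℝ, 0 ≤ S → 0 ≤ I → HasDerivAt (fun y => F₂ S y) (F₂I S I) I)
    (hdf₁S : ∀ S I : ℝ, 0 ≤ S → 0 ≤ I → HasDerivAt (fun x => f₁ x I) (f₁S S I) S)
    (hdf₁I : ∀ S I : ℝ, 0 ≤ S → 0 ≤ I → HasDerivAt (fun y => f₁ S y) (f₁I S I) I)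
    (hdf₂S : ∀ S I : ℝ, 0 ≤ S → 0 ≤ I → HasDerivAt (fun x => f₂ x I) (f₂S S I) S)
    (hdf₂I : ∀ S I : ℝ, 0 ≤ S → 0 ≤ I → HasDerivAt (fun y => f₂ S y) (f₂I S I) I)
    (hH2f₁S : ∀ S I : ℝ, 0 ≤ S → 0 ≤ I → 0 < f₁S S I)
    (hH2f₁I : ∀ S I : ℝ, 0 ≤ S → 0 ≤ I → f₁I S I ≤ 0)
    (hH2f₂S : ∀ S I : ℝ, 0 ≤ S → 0 ≤ I → 0 < f₂S S I)
    (hH2f₂I : ∀ S I : ℝ, 0 ≤ S → 0 ≤ I → f₂I S I ≤ 0)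
    (Sb Vb Ib : ℝ) (hSb : 0 < Sb) (hIb : 0 < Ib)
    (hbeq1 : Λ - F₁ Sb Ib - lam * Sb = 0)
    (hbeq2 : r * Sb - μ * Vb = 0)
    (hbeq3 : F₁ Sb Ib - α₁ * Ib = 0)
    (St Vt It : ℝ) (hSt : 0 < St) (hIt : 0 < It)
    (hteq1 : Λ - F₂ St It - lam * St = 0)
    (hteq2 : r * St - (μ + k * It) * Vt = 0)
    (hteq3 : F₂ St It + k * It * Vt - α₂ * It = 0)
    (hRb₂ : 1 < (F₂I Sb 0 + k * Vb) / α₂)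
    (hRt₁ : 1 < F₁I St 0 / α₁) :
    ∃ Ss Vs Is1 Is2 : ℝ, 0 < Ss ∧ 0 < Vs ∧ 0 < Is1 ∧ 0 < Is2 ∧
      Λ - F₁ Ss Is1 - F₂ Ss Is2 - lam * Ss = 0 ∧
      r * Ss - (μ + k * Is2) * Vs = 0 ∧
      F₁ Ss Is1 - α₁ * Is1 = 0 ∧
      F₂ Ss Is2 + k * Is2 * Vs - α₂ * Is2 = 0 := by
  subst hlam
  have hα₁pos : 0 < α₁ := hμ.trans hα₁
  have hα₂pos : 0 < α₂ := hμ.trans hα₂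
  have hf₁ := IsPerCapitaIncidence.of_hasDerivAt hf₁C1.continuousOn hdf₁S hdf₁I hH2f₁S hH2f₁I
  have hf₂ := IsPerCapitaIncidence.of_hasDerivAt hf₂C1.continuousOn hdf₂S hdf₂I hH2f₂S hH2f₂I
  have hf₂0 : ∀ I, 0 ≤ I → f₂ 0 I = 0 := fun I => apply_eq_zero_of_mul_eq_zero
    (hdf₂I 0 0 le_rfl le_rfl).continuousAt fun y hy => hH1₂ 0 y ▸ (hF₂zero 0 y le_rfl hy).1
  have hF₁I : F₁I St 0 = f₁ St 0 := (hdF₁I St 0 hSt.le le_rfl).eq_apply_zero_of_eq_mul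
    (hH1₁ St) (hdf₁I St 0 hSt.le le_rfl).differentiableAt
  have hF₂I : F₂I Sb 0 = f₂ Sb 0 := (hdF₂I Sb 0 hSb.le le_rfl).eq_apply_zero_of_eq_mul
    (hH1₂ Sb) (hdf₂I Sb 0 hSb.le le_rfl).differentiableAt
  have hR₂ : 0 < growth₂ f₂ k r μ α₂ Sb 0 := by
    rw [hF₂I, one_lt_div hα₂pos] at hRb₂
    rw [growth₂, mul_zero, add_zero, show r * Sb / μ = Vb by field_simp; linarith]
    linarith
  have hb₁ : f₁ Sb Ib = α₁ := mul_left_cancel₀ hIb.ne' (by linarith [hH1₁ Sb Ib])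
  have ht₁ : growth₂ f₂ k r μ α₂ St It = 0 :=
    (growth₂_eq_zero_iff hIt (by positivity) hteq2).2 (hH1₂ St It ▸ hteq3)
  have ht₃ : 0 ≤ f₂ St It :=
    nonneg_of_mul_nonneg_right (hH1₂ St It ▸ hF₂nn St It hSt.le hIt.le) hIt
  obtain ⟨S, I₁, I₂, hS, hI₁, hI₂, h₁, h₂, h₃⟩ := exists_coexistence (Λ := Λ) hf₁ hf₂ hf₂0
    hr hμ hk hα₁pos hα₂pos hSb.le hIb.le hb₁ (by linarith [hH1₁ Sb Ib]) hSt hIt ht₁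
    (by linarith [hH1₂ St It]) ht₃ hR₂ (by rwa [hF₁I, one_lt_div hα₁pos] at hRt₁)
  have hV : r * S - (μ + k * I₂) * (r * S / (μ + k * I₂)) = 0 := by field_simp; ring
  refine ⟨S, r * S / (μ + k * I₂), I₁, I₂, hS, by positivity, hI₁, hI₂, ?_, hV, ?_, ?_⟩
  · rw [hH1₁, hH1₂, h₁]; linarith
  · rw [hH1₁, h₁]; ring
  · rw [hH1₂]; exact (growth₂_eq_zero_iff hI₂ (by positivity) hV).1 h₂

/-- Theorem 5.12: if R̄₂ > 1 and R̃₁ > 1, system (3) admits an endemic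
equilibrium with all four components positive. -/
theorem endemic_equilibrium_exists
    (Λ r μ k α₁ α₂ lam : ℝ)
    (hΛ : 0 < Λ) (hr : 0 < r) (hμ : 0 < μ) (hk : 0 < k)
    (hα₁ : μ < α₁) (hα₂ : μ < α₂) (hlam : lam = r + μ)
    (F₁ F₂ f₁ f₂ F₁S F₁I F₂S F₂I f₁S f₁I f₂S f₂I : ℝ → ℝ → ℝ)
    (hF₁nn : ∀ S I : ℝ, 0 ≤ S → 0 ≤ I → 0 ≤ F₁ S I)
    (hF₂nn : ∀ S I : ℝ, 0 ≤ S → 0 ≤ I → 0 ≤ F₂ S I)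
    (hF₁C1 : ContDiffOn ℝ 1 (fun p : ℝ × ℝ => F₁ p.1 p.2) {p : ℝ × ℝ | 0 ≤ p.1 ∧ 0 ≤ p.2})
    (hF₂C1 : ContDiffOn ℝ 1 (fun p : ℝ × ℝ => F₂ p.1 p.2) {p : ℝ × ℝ | 0 ≤ p.1 ∧ 0 ≤ p.2})
    (hf₁C1 : ContDiffOn ℝ 1 (fun p : ℝ × ℝ => f₁ p.1 p.2) {p : ℝ × ℝ | 0 ≤ p.1 ∧ 0 ≤ p.2})
    (hf₂C1 : ContDiffOn ℝ 1 (fun p : ℝ × ℝ => f₂ p.1 p.2) {p : ℝ × ℝ | 0 ≤ p.1 ∧ 0 ≤ p.2})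
    (hH1₁ : ∀ S I : ℝ, F₁ S I = I * f₁ S I)
    (hH1₂ : ∀ S I : ℝ, F₂ S I = I * f₂ S I)
    (hF₁zero : ∀ S I : ℝ, 0 ≤ S → 0 ≤ I → F₁ 0 I = 0 ∧ F₁ S 0 = 0)
    (hF₂zero : ∀ S I : ℝ, 0 ≤ S → 0 ≤ I → F₂ 0 I = 0 ∧ F₂ S 0 = 0)
    (hdF₁S : ∀ S I : ℝ, 0 ≤ S → 0 ≤ I → HasDerivAt (fun x => F₁ x I) (F₁S S I) S)
    (hdF₁I : ∀ S I : ℝ, 0 ≤ S → 0 ≤ I → HasDerivAt (fun y => F₁ S y) (F₁I S I) I)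
    (hdF₂S : ∀ S I : ℝ, 0 ≤ S → 0 ≤ I → HasDerivAt (fun x => F₂ x I) (F₂S S I) S)
    (hdF₂I : ∀ S I : ℝ, 0 ≤ S → 0 ≤ I → HasDerivAt (fun y => F₂ S y) (F₂I S I) I)
    (hdf₁S : ∀ S I : ℝ, 0 ≤ S → 0 ≤ I → HasDerivAt (fun x => f₁ x I) (f₁S S I) S)
    (hdf₁I : ∀ S I : ℝ, 0 ≤ S → 0 ≤ I → HasDerivAt (fun y => f₁ S y) (f₁I S I) I)
    (hdf₂S : ∀ S I : ℝ, 0 ≤ S → 0 ≤ I → HasDerivAt (fun x => f₂ x I) (f₂S S I) S)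
    (hdf₂I : ∀ S I : ℝ, 0 ≤ S → 0 ≤ I → HasDerivAt (fun y => f₂ S y) (f₂I S I) I)
    (hH2f₁S : ∀ S I : ℝ, 0 ≤ S → 0 ≤ I → 0 < f₁S S I)
    (hH2f₁I : ∀ S I : ℝ, 0 ≤ S → 0 ≤ I → f₁I S I ≤ 0)
    (hH2f₂S : ∀ S I : ℝ, 0 ≤ S → 0 ≤ I → 0 < f₂S S I)
    (hH2f₂I : ∀ S I : ℝ, 0 ≤ S → 0 ≤ I → f₂I S I ≤ 0)
    (Sb Vb Ib : ℝ) (hSb : 0 < Sb) (hVb : 0 < Vb) (hIb : 0 < Ib)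
    (hbeq1 : Λ - F₁ Sb Ib - lam * Sb = 0)
    (hbeq2 : r * Sb - μ * Vb = 0)
    (hbeq3 : F₁ Sb Ib - α₁ * Ib = 0)
    (St Vt It : ℝ) (hSt : 0 < St) (hVt : 0 < Vt) (hIt : 0 < It)
    (hteq1 : Λ - F₂ St It - lam * St = 0)
    (hteq2 : r * St - (μ + k * It) * Vt = 0)
    (hteq3 : F₂ St It + k * It * Vt - α₂ * It = 0)
    (hRb₂ : 1 < (F₂I Sb 0 + k * Vb) / α₂)
    (hRt₁ : 1 < F₁I St 0 / α₁) :
    ∃ Ss Vs Is1 Is2 : ℝ, 0 < Ss ∧ 0 < Vs ∧ 0 < Is1 ∧ 0 < Is2 ∧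
      Λ - F₁ Ss Is1 - F₂ Ss Is2 - lam * Ss = 0 ∧
      r * Ss - (μ + k * Is2) * Vs = 0 ∧
      F₁ Ss Is1 - α₁ * Is1 = 0 ∧
      F₂ Ss Is2 + k * Is2 * Vs - α₂ * Is2 = 0 :=
  endemic_equilibrium_exists_general Λ r μ k α₁ α₂ lam hr hμ hk hα₁ hα₂ hlam F₁ F₂ f₁ f₂ F₁I F₂I f₁S
    f₁I f₂S f₂I hF₂nn hf₁C1 hf₂C1 hH1₁ hH1₂ hF₂zero hdF₁I hdF₂I hdf₁S hdf₁I hdf₂S hdf₂I hH2f₁S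
    hH2f₁I hH2f₂S hH2f₂I Sb Vb Ib hSb hIb hbeq1 hbeq2 hbeq3 St Vt It hSt hIt hteq1 hteq2 hteq3 hRb₂
    hRt₁
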